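/- arXiv:1910.09196 — 3 statements merged into one kernel-verified Lean document; each statement's English description precedes it below -/
import Mathlib

section
/- Let p ∈ [0,1], let D be a finite set, and for each j ∈ D let z_j ∈ {0,1}. If π ∈ ℝ satisfies 0 ≤ π ≤ p, π ≤ z_j for all j ∈ D, and π ≥ p + (∑_{j∈D} z_j) - |D|, then π = p if z_j = 1 for all j ∈ D, and π = 0 otherwise. Consequently π = p · ∏_{j∈D} z_j. -/
/-- Aggregated path-probability constraints of the improved MILP formulation:
if `0 ≤ π ≤ p`, `π ≤ z j` for all `j`, and `π ≥ p + ∑ z j - |D|`, with each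
`z j` binary, then `π = p` if all `z j = 1`, `π = 0` otherwise, i.e.
`π = p * ∏ j, z j`. -/
theorem path_probability_characterization
    {D : Type*} [Fintype D] (p π : ℝ) (z : D → ℝ)
    (hp0 : 0 ≤ p) (hp1 : p ≤ 1) (hz : ∀ j, z j = 0 ∨ z j = 1)
    (h1 : 0 ≤ π) (h2 : π ≤ p) (h3 : ∀ j, π ≤ z j)
    (h4 : p + (∑ j, z j) - (Fintype.card D : ℝ) ≤ π) :
    ((∀ j, z j = 1) → π = p) ∧ ((∃ j, z j = 0) → π = 0) ∧
      π = p * ∏ j, z j := by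
  have hall : (∀ j, z j = 1) → π = p := by
    intro h
    have hsum : (∑ j, z j) = (Fintype.card D : ℝ) := by
      simp [h, Finset.sum_const, Finset.card_univ]
    linarith [h4, hsum]
  have hex : (∃ j, z j = 0) → π = 0 := by
    rintro ⟨j, hj⟩
    have := h3 j
    linarith [this, hj]
  refine ⟨hall, hex, ?_⟩
  by_cases h : ∀ j, z j = 1
  · have : (∏ j, z j) = 1 := by simp [h]
    rw [this, mul_one]; exact hall h
  · push_neg at h
    obtain ⟨j, hj⟩ := h
    have hj0 : z j = 0 := (hz j).resolve_right hj
    have : (∏ j, z j) = 0 := Finset.prod_eq_zero (Finset.mem_univ j) hj0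
    rw [this, mul_zero]; exact hex ⟨j, hj0⟩
end

section
/- With the setup of Proposition 1 (finite S, probabilities π, consequences 𝒞, α ∈ (0,1], c° = min 𝒞, c* = max 𝒞, M = c* - c°, ε = half the minimum positive gap between distinct consequence values), there exist binary variables λ(s), λ̄(s) ∈ {0,1} and reals ρ(s), ρ̄(s) ∈ [0,1] such that with η = VaR_α all constraints (η - 𝒞(s) ≤ Mλ(s); η - 𝒞(s) ≥ (M+ε)λ(s) - M; η - 𝒞(s) ≤ (M+ε)λ̄(s) - ε; η - 𝒞(s) ≥ M(λ̄(s)-1); ρ̄(s) ≤ λ̄(s); π(s) - (1-λ(s)) ≤ ρ(s) ≤ λ(s); ρ(s) ≤ ρ̄(s) ≤ π(s); ∑_s ρ̄(s) = α) are satisfied; i.e., η = VaR_α is feasible for the CVaR MILP. -/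
/-!
Take `λ = 1{𝒞 < η}`, `λ̄ = 1{𝒞 ≤ η}`, `ρ = π·1{𝒞 < η}` and `ρ̄ = ρ + t·π·1{𝒞 = η}`, where
`t = (α - P(𝒞 < η)) / P(𝒞 = η) ∈ [0, 1]` because `P(𝒞 < η) < α ≤ P(𝒞 < η) + P(𝒞 = η)`.
The big-M constraints hold because `η` and every `𝒞 s` lie in `[c°, c*]`, and the `ε`-margins
because `η` is itself a consequence value, so any other value is at least `2ε` away from it.
-/

open Finset

lemma Finset.abs_sub_le_max'_sub_min' {α : Type*} [AddCommGroup α] [LinearOrder α]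
    [IsOrderedAddMonoid α] {s : Finset α} (hs : s.Nonempty) {a b : α} (ha : a ∈ s) (hb : b ∈ s) :
    |a - b| ≤ s.max' hs - s.min' hs :=
  abs_sub_le_iff.2
    ⟨sub_le_sub (s.le_max' a ha) (s.min'_le b hb), sub_le_sub (s.le_max' b hb) (s.min'_le a ha)⟩

lemma Finset.sum_filter_le_eq_add {ι β M : Type*} [LinearOrder β] [AddCommMonoid M]
    (s : Finset ι) (g : ι → β) (b : β) (f : ι → M) :
    ∑ i ∈ s with g i ≤ b, f i = ∑ i ∈ s with g i < b, f i + ∑ i ∈ s with g i = b, f i := by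
  classical
  simp_rw [le_iff_lt_or_eq]
  rw [filter_or, sum_union (disjoint_filter.2 fun _ _ hlt => hlt.ne)]

lemma exists_mem_Icc_add_mul_eq {a b c : ℝ} (hac : a < c) (hcb : c ≤ a + b) :
    ∃ t ∈ Set.Icc (0 : ℝ) 1, a + t * b = c := by
  have hb : 0 < b := by linarith
  refine ⟨(c - a) / b, ⟨by positivity, (div_le_one hb).2 (by linarith)⟩, ?_⟩
  field_simp
  ring

namespace CVaRMILP

variable {S : Type*} (π 𝒞 : S → ℝ) (η t : ℝ)

noncomputable def lam (s : S) : ℝ := if 𝒞 s < η then 1 else 0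

noncomputable def lamBar (s : S) : ℝ := if 𝒞 s ≤ η then 1 else 0

noncomputable def rho (s : S) : ℝ := if 𝒞 s < η then π s else 0

noncomputable def rhoBar (s : S) : ℝ := rho π 𝒞 η s + if 𝒞 s = η then t * π s else 0

lemma lam_eq_zero_or_eq_one (s : S) : lam 𝒞 η s = 0 ∨ lam 𝒞 η s = 1 :=
  (ite_eq_or_eq _ _ _).symm

lemma lamBar_eq_zero_or_eq_one (s : S) : lamBar 𝒞 η s = 0 ∨ lamBar 𝒞 η s = 1 :=
  (ite_eq_or_eq _ _ _).symm

section BigM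

variable {𝒞 η} {M ε : ℝ} {s : S}

lemma sub_le_mul_lam (hM : |η - 𝒞 s| ≤ M) : η - 𝒞 s ≤ M * lam 𝒞 η s := by
  unfold lam
  split_ifs
  · linarith [le_abs_self (η - 𝒞 s)]
  · linarith

lemma mul_lam_sub_le (hM : |η - 𝒞 s| ≤ M) (hgap : 𝒞 s ≠ η → ε ≤ |η - 𝒞 s|) :
    (M + ε) * lam 𝒞 η s - M ≤ η - 𝒞 s := by
  unfold lam
  split_ifs with h
  · have := hgap h.ne
    rw [abs_of_pos (sub_pos.2 h)] at this
    linarith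
  · linarith [neg_abs_le (η - 𝒞 s)]

lemma sub_le_mul_lamBar_sub (hM : |η - 𝒞 s| ≤ M) (hgap : 𝒞 s ≠ η → ε ≤ |η - 𝒞 s|) :
    η - 𝒞 s ≤ (M + ε) * lamBar 𝒞 η s - ε := by
  unfold lamBar
  split_ifs with h
  · linarith [le_abs_self (η - 𝒞 s)]
  · have hlt := not_le.1 h
    have := hgap hlt.ne'
    rw [abs_of_neg (sub_neg.2 hlt)] at this
    linarith

lemma mul_lamBar_sub_one_le (hM : |η - 𝒞 s| ≤ M) : M * (lamBar 𝒞 η s - 1) ≤ η - 𝒞 s := by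
  unfold lamBar
  split_ifs
  · linarith
  · linarith [neg_abs_le (η - 𝒞 s)]

end BigM

section Masses

variable {π t} {s : S}

lemma rho_mem_Icc (hπ0 : 0 ≤ π s) (hπ1 : π s ≤ 1) : 0 ≤ rho π 𝒞 η s ∧ rho π 𝒞 η s ≤ 1 := by
  unfold rho
  split_ifs <;> constructor <;> linarith

lemma rho_le_lam (hπ1 : π s ≤ 1) : rho π 𝒞 η s ≤ lam 𝒞 η s := by
  unfold rho lam
  split_ifs <;> linarith

lemma sub_one_sub_lam_le_rho (hπ1 : π s ≤ 1) : π s - (1 - lam 𝒞 η s) ≤ rho π 𝒞 η s := by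
  unfold rho lam
  split_ifs <;> linarith

variable (ht : t ∈ Set.Icc (0 : ℝ) 1)
include ht

lemma rho_le_rhoBar (hπ0 : 0 ≤ π s) : rho π 𝒞 η s ≤ rhoBar π 𝒞 η t s := by
  unfold rhoBar
  split_ifs
  · linarith [mul_nonneg ht.1 hπ0]
  · linarith

lemma rhoBar_le_pi (hπ0 : 0 ≤ π s) : rhoBar π 𝒞 η t s ≤ π s := by
  have := mul_le_of_le_one_left hπ0 ht.2
  unfold rhoBar rho
  split_ifs <;> linarith

lemma rhoBar_le_lamBar (hπ0 : 0 ≤ π s) (hπ1 : π s ≤ 1) :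
    rhoBar π 𝒞 η t s ≤ lamBar 𝒞 η s := by
  have := mul_le_of_le_one_left hπ0 ht.2
  unfold rhoBar rho lamBar
  split_ifs <;> linarith

lemma rhoBar_mem_Icc (hπ0 : 0 ≤ π s) (hπ1 : π s ≤ 1) :
    0 ≤ rhoBar π 𝒞 η t s ∧ rhoBar π 𝒞 η t s ≤ 1 :=
  ⟨(rho_mem_Icc 𝒞 η hπ0 hπ1).1.trans (rho_le_rhoBar 𝒞 η ht hπ0),
    (rhoBar_le_pi 𝒞 η ht hπ0).trans hπ1⟩

end Masses

lemma sum_rhoBar [Fintype S] :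
    ∑ s, rhoBar π 𝒞 η t s =
      ∑ s with 𝒞 s < η, π s + t * ∑ s with 𝒞 s = η, π s := by
  simp only [rhoBar, rho, sum_add_distrib, sum_filter, mul_sum]
  simp only [mul_ite, mul_zero]

end CVaRMILP

open CVaRMILP in
/-- Proposition 1, feasibility part: with `c° = min 𝒞`, `c* = max 𝒞`,
`M = c* - c°`, `ε` half the minimum positive gap between distinct consequence
values, and `η = VaR_α` (so `P(𝒞<η) < α ≤ P(𝒞≤η)` and `η` is a consequence
value), there exist binary `λ(s), λ̄(s)` and reals `ρ(s), ρ̄(s) ∈ [0,1]`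
satisfying all the CVaR MILP constraints. -/
theorem cvar_milp_feasibility
    {S : Type*} [Fintype S] [Nonempty S] (π : S → ℝ) (𝒞 : S → ℝ)
    (α : ℝ)
    (hπ0 : ∀ s, 0 ≤ π s) (hπ1 : ∀ s, π s ≤ 1)
    (M ε : ℝ)
    (hM : M = (Finset.univ.image 𝒞).max' (by simp) - (Finset.univ.image 𝒞).min' (by simp))
    (hε0 : 0 < ε)
    (hε : ∀ s s' : S, 𝒞 s ≠ 𝒞 s' → 2 * ε ≤ |𝒞 s - 𝒞 s'|)
    (η : ℝ) (hηval : ∃ s : S, 𝒞 s = η)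
    (hlow : (∑ s ∈ Finset.univ.filter (fun s => 𝒞 s < η), π s) < α)
    (hhigh : α ≤ ∑ s ∈ Finset.univ.filter (fun s => 𝒞 s ≤ η), π s) :
    ∃ lam lamBar ρ ρbar : S → ℝ,
      (∀ s, lam s = 0 ∨ lam s = 1) ∧
      (∀ s, lamBar s = 0 ∨ lamBar s = 1) ∧
      (∀ s, 0 ≤ ρ s ∧ ρ s ≤ 1) ∧
      (∀ s, 0 ≤ ρbar s ∧ ρbar s ≤ 1) ∧
      (∀ s, η - 𝒞 s ≤ M * lam s) ∧
      (∀ s, (M + ε) * lam s - M ≤ η - 𝒞 s) ∧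
      (∀ s, η - 𝒞 s ≤ (M + ε) * lamBar s - ε) ∧
      (∀ s, M * (lamBar s - 1) ≤ η - 𝒞 s) ∧
      (∀ s, ρbar s ≤ lamBar s) ∧
      (∀ s, π s - (1 - lam s) ≤ ρ s) ∧
      (∀ s, ρ s ≤ lam s) ∧
      (∀ s, ρ s ≤ ρbar s) ∧
      (∀ s, ρbar s ≤ π s) ∧
      (∑ s, ρbar s) = α := by
  obtain ⟨s₀, rfl⟩ := hηval
  have hrange (s : S) : |𝒞 s₀ - 𝒞 s| ≤ M :=
    hM ▸ abs_sub_le_max'_sub_min' _ (mem_image_of_mem _ (mem_univ s₀))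
      (mem_image_of_mem _ (mem_univ s))
  have hgap (s : S) (hs : 𝒞 s ≠ 𝒞 s₀) : ε ≤ |𝒞 s₀ - 𝒞 s| := by
    linarith [abs_sub_comm (𝒞 s) (𝒞 s₀), hε s s₀ hs]
  rw [sum_filter_le_eq_add] at hhigh
  obtain ⟨t, ht, hmass⟩ := exists_mem_Icc_add_mul_eq hlow hhigh
  exact ⟨lam 𝒞 (𝒞 s₀), lamBar 𝒞 (𝒞 s₀), rho π 𝒞 (𝒞 s₀), rhoBar π 𝒞 (𝒞 s₀) t,
    lam_eq_zero_or_eq_one _ _, lamBar_eq_zero_or_eq_one _ _,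
    fun s => rho_mem_Icc _ _ (hπ0 s) (hπ1 s), fun s => rhoBar_mem_Icc _ _ ht (hπ0 s) (hπ1 s),
    fun s => sub_le_mul_lam (hrange s), fun s => mul_lam_sub_le (hrange s) (hgap s),
    fun s => sub_le_mul_lamBar_sub (hrange s) (hgap s), fun s => mul_lamBar_sub_one_le (hrange s),
    fun s => rhoBar_le_lamBar _ _ ht (hπ0 s) (hπ1 s), fun s => sub_one_sub_lam_le_rho _ _ (hπ1 s),
    fun s => rho_le_lam _ _ (hπ1 s), fun s => rho_le_rhoBar _ _ ht (hπ0 s),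
    fun s => rhoBar_le_pi _ _ ht (hπ0 s), (sum_rhoBar π 𝒞 _ t).trans hmass⟩
end

section
/- Under the constraint system of Proposition 1, for any feasible (η, λ, λ̄, ρ, ρ̄): if 𝒞(s) < η then λ(s) = 1 (hence ρ(s) = π(s) ≤ ρ̄(s)), if 𝒞(s) > η then λ̄(s) = 0 (hence ρ̄(s) = 0), and if 𝒞(s) = η then λ(s) = 0. Consequently ∑_s ρ̄(s) = P(𝒞 < η) + ∑_{𝒞(s)=η} ρ̄(s) with 0 ≤ ∑_{𝒞(s)=η} ρ̄(s) ≤ P(𝒞 = η). -/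
open scoped Classical

/-- Structural consequence of the MILP constraints in Proposition 1: for any
feasible `(η, λ, λ̄, ρ, ρ̄)`, `𝒞(s) < η` forces `λ(s) = 1` (hence
`ρ(s) = π(s) ≤ ρ̄(s)`), `𝒞(s) > η` forces `λ̄(s) = 0` (hence `ρ̄(s) = 0`),
and `𝒞(s) = η` forces `λ(s) = 0`; consequently
`α = ∑ ρ̄(s) = P(𝒞<η) + ∑_{𝒞(s)=η} ρ̄(s)` with
`0 ≤ ∑_{𝒞(s)=η} ρ̄(s) ≤ P(𝒞=η)`. -/
theorem cvar_milp_structure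
    {S : Type*} [Fintype S] (π : S → ℝ) (𝒞 : S → ℝ)
    (α : ℝ) (hα0 : 0 < α) (hα1 : α ≤ 1)
    (hπ0 : ∀ s, 0 ≤ π s) (hπ1 : ∀ s, π s ≤ 1) (hsum : ∑ s, π s = 1)
    (M ε : ℝ)
    (hM0 : 0 ≤ M) (hε0 : 0 < ε)
    (η : ℝ) (lam lamBar ρ ρbar : S → ℝ)
    (hlamBin : ∀ s, lam s = 0 ∨ lam s = 1)
    (hlamBarBin : ∀ s, lamBar s = 0 ∨ lamBar s = 1)
    (hρ01 : ∀ s, 0 ≤ ρ s ∧ ρ s ≤ 1)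
    (hρbar01 : ∀ s, 0 ≤ ρbar s ∧ ρbar s ≤ 1)
    (hc1 : ∀ s, η - 𝒞 s ≤ M * lam s)
    (hc2 : ∀ s, (M + ε) * lam s - M ≤ η - 𝒞 s)
    (hc3 : ∀ s, η - 𝒞 s ≤ (M + ε) * lamBar s - ε)
    (hc4 : ∀ s, M * (lamBar s - 1) ≤ η - 𝒞 s)
    (hc5 : ∀ s, ρbar s ≤ lamBar s)
    (hc6 : ∀ s, π s - (1 - lam s) ≤ ρ s)
    (hc7 : ∀ s, ρ s ≤ lam s)
    (hc8 : ∀ s, ρ s ≤ ρbar s)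
    (hc9 : ∀ s, ρbar s ≤ π s)
    (hc10 : (∑ s, ρbar s) = α) :
    (∀ s, 𝒞 s < η → lam s = 1 ∧ ρ s = π s ∧ π s ≤ ρbar s) ∧
    (∀ s, η < 𝒞 s → lamBar s = 0 ∧ ρbar s = 0) ∧
    (∀ s, 𝒞 s = η → lam s = 0) ∧
    α = (∑ s ∈ Finset.univ.filter (fun s => 𝒞 s < η), π s) +
        (∑ s ∈ Finset.univ.filter (fun s => 𝒞 s = η), ρbar s) ∧
    0 ≤ (∑ s ∈ Finset.univ.filter (fun s => 𝒞 s = η), ρbar s) ∧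
    (∑ s ∈ Finset.univ.filter (fun s => 𝒞 s = η), ρbar s) ≤
      ∑ s ∈ Finset.univ.filter (fun s => 𝒞 s = η), π s := by
  have hlt : ∀ s, 𝒞 s < η → lam s = 1 ∧ ρ s = π s ∧ π s ≤ ρbar s := by
    intro s hs
    have hlam : lam s = 1 := by
      rcases hlamBin s with h | h
      · exfalso; have := hc1 s; rw [h] at this; linarith
      · exact h
    have h6 := hc6 s; have h8 := hc8 s; have h9 := hc9 s
    rw [hlam] at h6
    exact ⟨hlam, le_antisymm (by linarith) (by linarith), by linarith⟩
  have hgt : ∀ s, η < 𝒞 s → lamBar s = 0 ∧ ρbar s = 0 := by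
    intro s hs
    have hlb : lamBar s = 0 := by
      rcases hlamBarBin s with h | h
      · exact h
      · exfalso; have := hc4 s; rw [h] at this; simp at this; linarith
    have h5 := hc5 s; rw [hlb] at h5
    exact ⟨hlb, le_antisymm h5 (hρbar01 s).1⟩
  have heq : ∀ s, 𝒞 s = η → lam s = 0 := by
    intro s hs
    rcases hlamBin s with h | h
    · exact h
    · exfalso; have := hc2 s; rw [h, hs] at this; simp at this; linarith
  refine ⟨hlt, hgt, heq, ?_, ?_, ?_⟩
  · have hsplit := Finset.sum_filter_add_sum_filter_not Finset.univ
      (fun s => 𝒞 s < η) ρbar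
    have h1 : ∑ s ∈ Finset.univ.filter (fun s => 𝒞 s < η), ρbar s
        = ∑ s ∈ Finset.univ.filter (fun s => 𝒞 s < η), π s := by
      refine Finset.sum_congr rfl fun s hs => ?_
      simp only [Finset.mem_filter] at hs
      obtain ⟨_, _, h⟩ := hlt s hs.2
      exact le_antisymm (hc9 s) h
    have h2 : ∑ s ∈ Finset.univ.filter (fun s => ¬ 𝒞 s < η), ρbar s
        = ∑ s ∈ Finset.univ.filter (fun s => 𝒞 s = η), ρbar s := by
      refine (Finset.sum_subset ?_ ?_).symm
      · intro s hs; simp only [Finset.mem_filter] at *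
        exact ⟨Finset.mem_univ s, by rw [hs.2]; exact lt_irrefl η⟩
      · intro s hs hns; simp only [Finset.mem_filter] at *
        have : η < 𝒞 s := lt_of_le_of_ne (not_lt.mp hs.2)
          (fun h => hns ⟨Finset.mem_univ s, h.symm⟩)
        exact (hgt s this).2
    rw [h1, h2] at hsplit
    rw [← hc10, ← hsplit]
  · exact Finset.sum_nonneg fun s _ => (hρbar01 s).1
  · exact Finset.sum_le_sum fun s _ => hc9 s
end
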